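/- arXiv:1906.04248 — 8 statements merged into one kernel-verified Lean document; each statement's English description precedes it below -/
import Mathlib

section
/- A commutative inverse monoid M is isomorphic (as an involutive monoid) to the disjoint union ∐_{s ∈ S} F(s) over its semilattice S of idempotents, where F(s) = { x | x x† = s }, with multiplication of x ∈ F(s) and y ∈ F(t) given by (st·x)(st·y) computed in F(st). -/
/-! The uniqueness of pseudo-inverses makes `†` an involutive automorphism fixing every
idempotent, so `S` is exactly the set of idempotents and `x ↦ ⟨x x†, x⟩` is a bijection
`M ≃ Σ s ∈ S, F(s)` whose inverse forgets `s`. It is multiplicative because for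
`s = x x†`, `t = y y†` one has `(s t x)(s t y) = (s x)(t y) = x y`. -/

structure IsPseudoInverse {M : Type*} [CommMonoid M] (dag : M → M) : Prop where
  mul_dag_mul : ∀ x, x * dag x * x = x
  dag_mul_dag : ∀ x, dag x * x * dag x = dag x
  eq_dag : ∀ x y, x * y * x = x → y * x * y = y → y = dag x

abbrev FibreSum {M : Type*} [CommMonoid M] (dag : M → M) :=
  Σ s : {s : M // s * dag s = s}, {x : M // x * dag x = s.1}

namespace IsPseudoInverse

variable {M : Type*} [CommMonoid M] {dag : M → M}

theorem dag_dag (hd : IsPseudoInverse dag) (x : M) : dag (dag x) = x :=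
  (hd.eq_dag (dag x) x (hd.dag_mul_dag x) (hd.mul_dag_mul x)).symm

theorem dag_mul (hd : IsPseudoInverse dag) (x y : M) : dag (x * y) = dag x * dag y := by
  refine (hd.eq_dag (x * y) (dag x * dag y) ?_ ?_).symm
  · calc x * y * (dag x * dag y) * (x * y)
        = (x * dag x * x) * (y * dag y * y) := by ac_rfl
      _ = x * y := by rw [hd.mul_dag_mul, hd.mul_dag_mul]
  · calc dag x * dag y * (x * y) * (dag x * dag y)
        = (dag x * x * dag x) * (dag y * y * dag y) := by ac_rfl
      _ = dag x * dag y := by rw [hd.dag_mul_dag, hd.dag_mul_dag]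

theorem isIdempotentElem_mul_dag (hd : IsPseudoInverse dag) (x : M) :
    IsIdempotentElem (x * dag x) :=
  calc x * dag x * (x * dag x) = x * dag x * x * dag x := by rw [← mul_assoc]
    _ = x * dag x := by rw [hd.mul_dag_mul]

theorem dag_eq_self_of_isIdempotentElem (hd : IsPseudoInverse dag) {e : M}
    (he : IsIdempotentElem e) : dag e = e :=
  (hd.eq_dag e e (by rw [he.eq, he.eq]) (by rw [he.eq, he.eq])).symm

theorem dag_one (hd : IsPseudoInverse dag) : dag (1 : M) = 1 :=
  hd.dag_eq_self_of_isIdempotentElem IsIdempotentElem.one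

theorem mul_dag_eq_self_iff (hd : IsPseudoInverse dag) {s : M} :
    s * dag s = s ↔ IsIdempotentElem s := by
  constructor
  · intro hs
    rw [← hs]
    exact hd.isIdempotentElem_mul_dag s
  · intro hs
    rw [hd.dag_eq_self_of_isIdempotentElem hs, hs.eq]

theorem mul_mul_dag (hd : IsPseudoInverse dag) (x y : M) :
    x * y * dag (x * y) = x * dag x * (y * dag y) := by
  rw [hd.dag_mul]
  ac_rfl

theorem mul_dag_mem_fibre_mul (hd : IsPseudoInverse dag) {s t x y : M}
    (hs : IsIdempotentElem s) (ht : IsIdempotentElem t) (hx : x * dag x = s)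
    (hy : y * dag y = t) :
    s * t * x * (s * t * y) * dag (s * t * x * (s * t * y)) = s * t := by
  simp only [hd.mul_mul_dag, hx, hy, (hd.mul_dag_eq_self_iff).2 hs,
    (hd.mul_dag_eq_self_iff).2 ht]
  calc s * t * s * (s * t * t) = s * s * s * (t * t * t) := by ac_rfl
    _ = s * t := by rw [hs.eq, hs.eq, ht.eq, ht.eq]

end IsPseudoInverse

namespace FibreSum

variable {M : Type*} [CommMonoid M] {dag : M → M}

-- The index `s` is recovered from the point `x` as `x * dag x`.
theorem ext_val {a b : FibreSum dag} (h : (a.2 : M) = b.2) : a = b := by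
  obtain ⟨⟨s, hs⟩, ⟨x, hx⟩⟩ := a
  obtain ⟨⟨t, ht⟩, ⟨y, hy⟩⟩ := b
  dsimp only at h hx hy
  subst h hx hy
  rfl

def mul (hd : IsPseudoInverse dag) (a b : FibreSum dag) : FibreSum dag :=
  ⟨⟨a.1 * b.1, (hd.mul_dag_eq_self_iff).2
      (((hd.mul_dag_eq_self_iff).1 a.1.2).mul ((hd.mul_dag_eq_self_iff).1 b.1.2))⟩,
    ⟨a.1 * b.1 * a.2 * (a.1 * b.1 * b.2),
      hd.mul_dag_mem_fibre_mul ((hd.mul_dag_eq_self_iff).1 a.1.2)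
        ((hd.mul_dag_eq_self_iff).1 b.1.2) a.2.2 b.2.2⟩⟩

def inv (hd : IsPseudoInverse dag) (a : FibreSum dag) : FibreSum dag :=
  ⟨a.1, ⟨dag a.2, by rw [hd.dag_dag, mul_comm]; exact a.2.2⟩⟩

def one (hd : IsPseudoInverse dag) : FibreSum dag :=
  ⟨⟨1, by rw [hd.dag_one, mul_one]⟩, ⟨1, show (1 : M) * dag 1 = 1 by rw [hd.dag_one, mul_one]⟩⟩

end FibreSum

namespace IsPseudoInverse

variable {M : Type*} [CommMonoid M] {dag : M → M}

def equivFibreSum (hd : IsPseudoInverse dag) : M ≃ FibreSum dag where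
  toFun x := ⟨⟨x * dag x, (hd.mul_dag_eq_self_iff).2 (hd.isIdempotentElem_mul_dag x)⟩, ⟨x, rfl⟩⟩
  invFun a := a.2
  left_inv _ := rfl
  right_inv _ := FibreSum.ext_val rfl

theorem equivFibreSum_mul (hd : IsPseudoInverse dag) (x y : M) :
    hd.equivFibreSum (x * y) = FibreSum.mul hd (hd.equivFibreSum x) (hd.equivFibreSum y) := by
  refine FibreSum.ext_val ?_
  change x * y = x * dag x * (y * dag y) * x * (x * dag x * (y * dag y) * y)
  have hs := hd.isIdempotentElem_mul_dag x
  have ht := hd.isIdempotentElem_mul_dag y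
  calc x * y = (x * dag x * x) * (y * dag y * y) := by rw [hd.mul_dag_mul, hd.mul_dag_mul]
    _ = (x * dag x * (x * dag x)) * (y * dag y * (y * dag y)) * x * y := by
      rw [hs.eq, ht.eq]; ac_rfl
    _ = x * dag x * (y * dag y) * x * (x * dag x * (y * dag y) * y) := by ac_rfl

theorem equivFibreSum_dag (hd : IsPseudoInverse dag) (x : M) :
    hd.equivFibreSum (dag x) = FibreSum.inv hd (hd.equivFibreSum x) :=
  FibreSum.ext_val rfl

theorem equivFibreSum_one (hd : IsPseudoInverse dag) :
    hd.equivFibreSum 1 = FibreSum.one hd :=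
  FibreSum.ext_val rfl

end IsPseudoInverse

/-- A commutative inverse monoid `M` is isomorphic (as an
involutive monoid) to the disjoint union `∐_{s ∈ S} F(s)` over its semilattice
`S` of idempotents, where `F(s) = { x | x * dag x = s }`, with multiplication
of `x ∈ F(s)` and `y ∈ F(t)` given by `(s*t*x) * (s*t*y)` computed in `F(s*t)`,
involution given componentwise by `dag`, and unit `1 ∈ F(1)`. -/
theorem stmt5 {M : Type*} [CommMonoid M] (dag : M → M)
    (h1 : ∀ x : M, x * dag x * x = x)
    (h2 : ∀ x : M, dag x * x * dag x = dag x)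
    (huniq : ∀ x y : M, x * y * x = x → y * x * y = y → y = dag x) :
    ∃ (mul' : (Σ s : {s : M // s * dag s = s}, {x : M // x * dag x = s.1}) →
              (Σ s : {s : M // s * dag s = s}, {x : M // x * dag x = s.1}) →
              (Σ s : {s : M // s * dag s = s}, {x : M // x * dag x = s.1}))
      (inv' : (Σ s : {s : M // s * dag s = s}, {x : M // x * dag x = s.1}) →
              (Σ s : {s : M // s * dag s = s}, {x : M // x * dag x = s.1}))
      (one' : Σ s : {s : M // s * dag s = s}, {x : M // x * dag x = s.1})
      (e : M ≃ Σ s : {s : M // s * dag s = s}, {x : M // x * dag x = s.1}),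
      (∀ a b, ((mul' a b).1 : M) = (a.1 : M) * (b.1 : M)) ∧
      (∀ a b, ((mul' a b).2 : M) =
        ((a.1 : M) * (b.1 : M) * (a.2 : M)) * ((a.1 : M) * (b.1 : M) * (b.2 : M))) ∧
      (∀ a, ((inv' a).1 : M) = (a.1 : M) ∧ ((inv' a).2 : M) = dag (a.2 : M)) ∧
      ((one'.1 : M) = 1 ∧ (one'.2 : M) = 1) ∧
      (∀ x y : M, e (x * y) = mul' (e x) (e y)) ∧
      (∀ x : M, e (dag x) = inv' (e x)) ∧
      e 1 = one' := by
  have hd : IsPseudoInverse dag := ⟨h1, h2, huniq⟩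
  exact ⟨FibreSum.mul hd, FibreSum.inv hd, FibreSum.one hd, hd.equivFibreSum,
    fun _ _ => rfl, fun _ _ => rfl, fun _ => ⟨rfl, rfl⟩, ⟨rfl, rfl⟩,
    hd.equivFibreSum_mul, hd.equivFibreSum_dag, hd.equivFibreSum_one⟩
end

section
/- In a compact inverse category, every endomorphism f : A → A equals the scalar multiple tr(f) • id_A of the identity, where tr denotes the (right) trace and • denotes scalar multiplication via the unitor. -/
open CategoryTheory MonoidalCategory

/-- A compact inverse category: a symmetric monoidal category in which every
object has a (right) dual, equipped with an identity-on-objects contravariant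
involution `dag` that respects the tensor, inverts all coherence isomorphisms,
recovers the counit of each duality from the unit via the symmetry, and
satisfies the inverse-category laws `f = f f† f` and
`f f† g g† = g g† f f†` for parallel-source `f`, `g`. -/
structure CompactInverseStruct (C : Type*) [Category C] [MonoidalCategory C]
    [SymmetricCategory C] [RightRigidCategory C] where
  dag : ∀ {A B : C}, (A ⟶ B) → (B ⟶ A)
  dag_dag : ∀ {A B : C} (f : A ⟶ B), dag (dag f) = f
  dag_comp : ∀ {A B D : C} (f : A ⟶ B) (g : B ⟶ D), dag (f ≫ g) = dag g ≫ dag f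
  dag_id : ∀ (A : C), dag (𝟙 A) = 𝟙 A
  dag_tensor : ∀ {A B A' B' : C} (f : A ⟶ B) (g : A' ⟶ B'),
    dag (f ⊗ₘ g) = dag f ⊗ₘ dag g
  dag_assoc : ∀ (A B D : C), dag (α_ A B D).hom = (α_ A B D).inv
  dag_lunit : ∀ (A : C), dag (λ_ A).hom = (λ_ A).inv
  dag_runit : ∀ (A : C), dag (ρ_ A).hom = (ρ_ A).inv
  dag_braid : ∀ (A B : C), dag (β_ A B).hom = (β_ A B).inv
  counit_eq : ∀ (A : C), ε_ A Aᘁ = (β_ Aᘁ A).hom ≫ dag (η_ A Aᘁ)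
  inv_law : ∀ {A B : C} (f : A ⟶ B), f ≫ dag f ≫ f = f
  comm_law : ∀ {A B B' : C} (f : A ⟶ B) (g : A ⟶ B'),
    (f ≫ dag f) ≫ (g ≫ dag g) = (g ≫ dag g) ≫ (f ≫ dag f)

/-- Scalar multiplication `s • f` of a morphism by a scalar, via the unitors. -/
def smul {C : Type*} [Category C] [MonoidalCategory C]
    (s : 𝟙_ C ⟶ 𝟙_ C) {A B : C} (f : A ⟶ B) : A ⟶ B :=
  (λ_ A).inv ≫ (s ⊗ₘ f) ≫ (λ_ B).hom

/-- The (right) trace `Tr(f)` of an endomorphism. -/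
def Tr {C : Type*} [Category C] [MonoidalCategory C]
    [SymmetricCategory C] [RightRigidCategory C] {A : C} (f : A ⟶ A) :
    𝟙_ C ⟶ 𝟙_ C :=
  η_ A Aᘁ ≫ (f ▷ Aᘁ) ≫ (β_ A Aᘁ).hom ≫ ε_ A Aᘁ

/-- The dual trace `tr(f) = Tr(f)*` of an endomorphism. -/
def trDual {C : Type*} [Category C] [MonoidalCategory C]
    [SymmetricCategory C] [RightRigidCategory C] {A : C} (f : A ⟶ A) :
    𝟙_ C ⟶ 𝟙_ C :=
  η_ A Aᘁ ≫ (β_ A Aᘁ).hom ≫ (Aᘁ ◁ f) ≫ ε_ A Aᘁ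

/-- In a compact inverse category, the "left cap" `(η† ▷ A) ≫ λ` equals the
"snake cap" `α ≫ (A ◁ ε) ≫ ρ` on `(A ⊗ Aᘁ) ⊗ A`. -/
theorem cap_eq {C : Type*} [Category C] [MonoidalCategory C]
    [SymmetricCategory C] [RightRigidCategory C]
    (D : CompactInverseStruct C) (A : C) :
    (D.dag (η_ A Aᘁ) ▷ A) ≫ (λ_ A).hom =
      (α_ A Aᘁ A).hom ≫ (A ◁ ε_ A Aᘁ) ≫ (ρ_ A).hom := by
  set u : (A ⊗ Aᘁ) ⊗ A ⟶ A := (D.dag (η_ A Aᘁ) ▷ A) ≫ (λ_ A).hom with hu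
  set v : (A ⊗ Aᘁ) ⊗ A ⟶ A := (α_ A Aᘁ A).hom ≫ (A ◁ ε_ A Aᘁ) ≫ (ρ_ A).hom
    with hv
  have dagu : D.dag u = (λ_ A).inv ≫ (η_ A Aᘁ ▷ A) := by
    rw [hu, D.dag_comp, D.dag_lunit, ← tensorHom_id, D.dag_tensor, D.dag_dag,
      D.dag_id, tensorHom_id]
  have snake : D.dag u ≫ v = 𝟙 A := by
    rw [dagu, hv]
    simp
  have dsnake : D.dag v ≫ u = 𝟙 A := by
    have h := congrArg D.dag snake
    rwa [D.dag_comp, D.dag_dag, D.dag_id] at h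
  have huv1 : (u ≫ D.dag u) ≫ v = u := by
    rw [Category.assoc, snake, Category.comp_id]
  have huv2 : (v ≫ D.dag v) ≫ u = v := by
    rw [Category.assoc, dsnake, Category.comp_id]
  have e2v : (v ≫ D.dag v) ≫ v = v := by
    rw [Category.assoc]; exact D.inv_law v
  calc u = (u ≫ D.dag u) ≫ v := huv1.symm
    _ = (u ≫ D.dag u) ≫ ((v ≫ D.dag v) ≫ v) := by rw [e2v]
    _ = ((u ≫ D.dag u) ≫ (v ≫ D.dag v)) ≫ v := by simp only [Category.assoc]
    _ = ((v ≫ D.dag v) ≫ (u ≫ D.dag u)) ≫ v := by rw [D.comm_law u v]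
    _ = (v ≫ D.dag v) ≫ ((u ≫ D.dag u) ≫ v) := by simp only [Category.assoc]
    _ = (v ≫ D.dag v) ≫ u := by rw [huv1]
    _ = v := huv2

/-- In a compact inverse category, every endomorphism
`f : A ⟶ A` equals the scalar multiple `tr(f) • 𝟙 A` of the identity, where
`tr` is the dual of the trace and `•` is scalar multiplication via the
unitor. -/
theorem stmt10 {C : Type*} [Category C] [MonoidalCategory C]
    [SymmetricCategory C] [RightRigidCategory C]
    (D : CompactInverseStruct C) (A : C) (f : A ⟶ A) :
    f = smul (trDual f) (𝟙 A) := by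
  have htr : trDual f = (η_ A Aᘁ ≫ (f ▷ Aᘁ)) ≫ D.dag (η_ A Aᘁ) := by
    rw [trDual, D.counit_eq]
    simp
  rw [smul, htr, tensorHom_id, comp_whiskerRight, comp_whiskerRight,
    Category.assoc, Category.assoc, cap_eq D A]
  rw [associator_naturality_left_assoc, ← whisker_exchange_assoc]
  simp [MonoidalCategory.rightUnitor_naturality]
end

section
/- An inverse category in which every scalar (endomorphism of any object, in the compact setting: of the tensor unit) is invertible and which is compact closed is a groupoid: every morphism f satisfies f† f = id and f f† = id. -/
open CategoryTheory MonoidalCategory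

section Aux

variable {C : Type*} [Category C] [MonoidalCategory C]
    [SymmetricCategory C] [RightRigidCategory C]

/-- Any "state" composed with its dagger is the identity scalar. -/
theorem CompactInverseStruct.state_dag (D : CompactInverseStruct C)
    (hscal : ∀ s : 𝟙_ C ⟶ 𝟙_ C, IsIso s) {X : C} (h : 𝟙_ C ⟶ X) :
    h ≫ D.dag h = 𝟙 (𝟙_ C) := by
  set t : 𝟙_ C ⟶ 𝟙_ C := h ≫ D.dag h with ht
  have hidem : t ≫ t = t := by
    calc t ≫ t = (h ≫ D.dag h ≫ h) ≫ D.dag h := by simp [ht]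
    _ = t := by rw [D.inv_law]
  haveI := hscal t
  exact (cancel_epi t).mp (by rw [hidem, Category.comp_id])

/-- Two states, one of which is "below" the other, are equal. -/
theorem CompactInverseStruct.state_eq (D : CompactInverseStruct C)
    (hscal : ∀ s : 𝟙_ C ⟶ 𝟙_ C, IsIso s) {X : C} (m n : 𝟙_ C ⟶ X)
    (hle : n ≫ (D.dag m ≫ m) = m) : m = n := by
  have hle' : n ≫ D.dag m ≫ m = m := by simpa using hle
  have hm1 : m ≫ D.dag m = 𝟙 _ := D.state_dag hscal m
  have hn1 : n ≫ D.dag n = 𝟙 _ := D.state_dag hscal n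
  have hPP : D.dag m ≫ m ≫ D.dag m ≫ m = D.dag m ≫ m := by
    calc D.dag m ≫ m ≫ D.dag m ≫ m = D.dag m ≫ (m ≫ D.dag m) ≫ m := by simp
    _ = D.dag m ≫ m := by rw [hm1]; simp
  have hQQ : D.dag n ≫ n ≫ D.dag n ≫ n = D.dag n ≫ n := by
    calc D.dag n ≫ n ≫ D.dag n ≫ n = D.dag n ≫ (n ≫ D.dag n) ≫ n := by simp
    _ = D.dag n ≫ n := by rw [hn1]; simp
  have hdagm : D.dag m = D.dag m ≫ m ≫ D.dag n := by
    conv_lhs => rw [← hle']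
    rw [D.dag_comp, D.dag_comp, D.dag_dag]
    simp
  have hnPn : n ≫ D.dag m ≫ m ≫ D.dag n = 𝟙 _ := by
    calc n ≫ D.dag m ≫ m ≫ D.dag n
        = n ≫ (D.dag m ≫ m ≫ D.dag m ≫ m) ≫ D.dag n := by rw [hPP]; simp
      _ = (n ≫ D.dag m ≫ m) ≫ D.dag m ≫ m ≫ D.dag n := by simp
      _ = m ≫ D.dag m := by rw [hle', ← hdagm]
      _ = 𝟙 _ := hm1
  have hPQ : (D.dag m ≫ m) ≫ D.dag n ≫ n = (D.dag n ≫ n) ≫ D.dag m ≫ m := by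
    have h := D.comm_law (D.dag m) (D.dag n)
    rwa [D.dag_dag, D.dag_dag] at h
  have hQPQ : (D.dag n ≫ n) ≫ (D.dag m ≫ m) ≫ D.dag n ≫ n = D.dag n ≫ n := by
    calc (D.dag n ≫ n) ≫ (D.dag m ≫ m) ≫ D.dag n ≫ n
        = D.dag n ≫ (n ≫ D.dag m ≫ m ≫ D.dag n) ≫ n := by simp
      _ = D.dag n ≫ n := by rw [hnPn]; simp
  have hPQ_eq : (D.dag m ≫ m) ≫ D.dag n ≫ n = D.dag n ≫ n := by
    calc (D.dag m ≫ m) ≫ D.dag n ≫ n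
        = (D.dag m ≫ m) ≫ D.dag n ≫ n ≫ D.dag n ≫ n := by rw [hQQ]
      _ = ((D.dag m ≫ m) ≫ D.dag n ≫ n) ≫ D.dag n ≫ n := by simp
      _ = ((D.dag n ≫ n) ≫ D.dag m ≫ m) ≫ D.dag n ≫ n := by rw [hPQ]
      _ = (D.dag n ≫ n) ≫ (D.dag m ≫ m) ≫ D.dag n ≫ n := by simp
      _ = D.dag n ≫ n := hQPQ
  have hP_eq_Q : D.dag m ≫ m = D.dag n ≫ n := by
    calc D.dag m ≫ m = (D.dag m ≫ m ≫ D.dag n) ≫ m := by rw [← hdagm]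
      _ = D.dag m ≫ m ≫ D.dag n ≫ n ≫ D.dag m ≫ m := by rw [hle']; simp
      _ = ((D.dag m ≫ m) ≫ D.dag n ≫ n) ≫ D.dag m ≫ m := by simp
      _ = (D.dag n ≫ n) ≫ D.dag m ≫ m := by rw [hPQ_eq]
      _ = (D.dag m ≫ m) ≫ D.dag n ≫ n := hPQ.symm
      _ = D.dag n ≫ n := hPQ_eq
  calc m = n ≫ D.dag m ≫ m := hle'.symm
    _ = n ≫ D.dag n ≫ n := by rw [hP_eq_Q]
    _ = n := D.inv_law n

/-- Every dagger idempotent is an identity. -/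
theorem CompactInverseStruct.idem_eq_id (D : CompactInverseStruct C)
    (hscal : ∀ s : 𝟙_ C ⟶ 𝟙_ C, IsIso s) {A : C} (e : A ⟶ A)
    (hdag : D.dag e = e) (hee : e ≫ e = e) : e = 𝟙 A := by
  have hdagE : D.dag (e ▷ Aᘁ) = e ▷ Aᘁ := by
    rw [← tensorHom_id, D.dag_tensor, D.dag_id, hdag]
  have hEE : (e ▷ Aᘁ) ≫ (e ▷ Aᘁ) = e ▷ Aᘁ := by
    rw [← comp_whiskerRight, hee]
  have hn1 : η_ A Aᘁ ≫ D.dag (η_ A Aᘁ) = 𝟙 _ := D.state_dag hscal _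
  have hcomm : (e ▷ Aᘁ) ≫ D.dag (η_ A Aᘁ) ≫ η_ A Aᘁ
      = (D.dag (η_ A Aᘁ) ≫ η_ A Aᘁ) ≫ (e ▷ Aᘁ) := by
    have h := D.comm_law (e ▷ Aᘁ) (D.dag (η_ A Aᘁ))
    rw [hdagE, hEE, D.dag_dag] at h
    simpa using h
  have hle : η_ A Aᘁ ≫ (D.dag (η_ A Aᘁ ≫ (e ▷ Aᘁ)) ≫ (η_ A Aᘁ ≫ (e ▷ Aᘁ)))
      = η_ A Aᘁ ≫ (e ▷ Aᘁ) := by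
    calc η_ A Aᘁ ≫ (D.dag (η_ A Aᘁ ≫ (e ▷ Aᘁ)) ≫ (η_ A Aᘁ ≫ (e ▷ Aᘁ)))
        = η_ A Aᘁ ≫ (e ▷ Aᘁ) ≫ D.dag (η_ A Aᘁ) ≫ η_ A Aᘁ ≫ (e ▷ Aᘁ) := by
          rw [D.dag_comp, hdagE]; simp
      _ = η_ A Aᘁ ≫ ((e ▷ Aᘁ) ≫ D.dag (η_ A Aᘁ) ≫ η_ A Aᘁ) ≫ (e ▷ Aᘁ) := by simp
      _ = η_ A Aᘁ ≫ ((D.dag (η_ A Aᘁ) ≫ η_ A Aᘁ) ≫ (e ▷ Aᘁ)) ≫ (e ▷ Aᘁ) := by rw [hcomm]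
      _ = (η_ A Aᘁ ≫ D.dag (η_ A Aᘁ)) ≫ η_ A Aᘁ ≫ (e ▷ Aᘁ) ≫ (e ▷ Aᘁ) := by simp
      _ = η_ A Aᘁ ≫ (e ▷ Aᘁ) := by rw [hn1, hEE]; simp
  have hmn : η_ A Aᘁ ≫ (e ▷ Aᘁ) = η_ A Aᘁ :=
    D.state_eq hscal (η_ A Aᘁ ≫ (e ▷ Aᘁ)) (η_ A Aᘁ) hle
  -- unname: the map g ↦ η ≫ (g ▷ Aᘁ) is injective
  have h1 : (tensorRightHomEquiv (𝟙_ C) A Aᘁ A) ((λ_ A).hom ≫ e)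
      = η_ A Aᘁ ≫ (e ▷ Aᘁ) := by
    simp [tensorRightHomEquiv, unitors_equal]
  have h2 : (tensorRightHomEquiv (𝟙_ C) A Aᘁ A) ((λ_ A).hom ≫ 𝟙 A)
      = η_ A Aᘁ := by
    simp [tensorRightHomEquiv, unitors_equal]
  have hname : (tensorRightHomEquiv (𝟙_ C) A Aᘁ A) ((λ_ A).hom ≫ e)
      = (tensorRightHomEquiv (𝟙_ C) A Aᘁ A) ((λ_ A).hom ≫ 𝟙 A) := by
    rw [h1, h2, hmn]
  have := (tensorRightHomEquiv (𝟙_ C) A Aᘁ A).injective hname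
  exact (cancel_epi (λ_ A).hom).mp this

end Aux


/-- A compact inverse category in which every scalar is
invertible is a groupoid: every morphism `f` satisfies `f ≫ f† = 𝟙` and
`f† ≫ f = 𝟙`, i.e. `f` is inverted by its dagger. -/
theorem stmt12 {C : Type*} [Category C] [MonoidalCategory C]
    [SymmetricCategory C] [RightRigidCategory C]
    (D : CompactInverseStruct C)
    (hscal : ∀ s : 𝟙_ C ⟶ 𝟙_ C, IsIso s)
    {A B : C} (f : A ⟶ B) :
    f ≫ D.dag f = 𝟙 A ∧ D.dag f ≫ f = 𝟙 B := by
  constructor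
  · apply D.idem_eq_id hscal
    · rw [D.dag_comp, D.dag_dag]
    · calc (f ≫ D.dag f) ≫ f ≫ D.dag f = (f ≫ D.dag f ≫ f) ≫ D.dag f := by simp
      _ = f ≫ D.dag f := by rw [D.inv_law]
  · apply D.idem_eq_id hscal
    · rw [D.dag_comp, D.dag_dag]
    · calc (D.dag f ≫ f) ≫ D.dag f ≫ f = (D.dag f ≫ f ≫ D.dag f) ≫ f := by simp
      _ = D.dag f ≫ f := by
          have := D.inv_law (D.dag f)
          rw [D.dag_dag] at this
          rw [this]
end

section
/- In a compact inverse category, for any endomorphism f : A → A, the scalar tr(f f†) is a self-adjoint idempotent: tr(f f†)† ∘ tr(f f†) = tr(f f†). -/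
open CategoryTheory MonoidalCategory

/-- In a compact inverse category, for any endomorphism
`f : A ⟶ A` the scalar `tr(f ≫ f†)` is a self-adjoint idempotent:
`tr(f f†)† ∘ tr(f f†) = tr(f f†)`. -/
theorem stmt13 {C : Type*} [Category C] [MonoidalCategory C]
    [SymmetricCategory C] [RightRigidCategory C]
    (D : CompactInverseStruct C) {A : C} (f : A ⟶ A) :
    trDual (f ≫ D.dag f) ≫ D.dag (trDual (f ≫ D.dag f)) = trDual (f ≫ D.dag f) := by
  have hw : ∀ {X P Q : C} (u : P ⟶ Q), D.dag (X ◁ u) = X ◁ D.dag u := by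
    intro X P Q u
    rw [← MonoidalCategory.id_tensorHom, D.dag_tensor, D.dag_id,
      MonoidalCategory.id_tensorHom]
  set h : 𝟙_ C ⟶ Aᘁ ⊗ A := η_ A Aᘁ ≫ (β_ A Aᘁ).hom ≫ (Aᘁ ◁ f) with hh
  have hdagh : D.dag h = (Aᘁ ◁ D.dag f) ≫ ε_ A Aᘁ := by
    rw [hh, D.dag_comp, D.dag_comp, hw, D.dag_braid,
      ← SymmetricCategory.braiding_swap_eq_inv_braiding, D.counit_eq,
      Category.assoc]
  have hs : trDual (f ≫ D.dag f) = h ≫ D.dag h := by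
    rw [hdagh, hh, trDual, MonoidalCategory.whiskerLeft_comp]
    simp [Category.assoc]
  have hself : D.dag (trDual (f ≫ D.dag f)) = trDual (f ≫ D.dag f) := by
    rw [hs, D.dag_comp, D.dag_dag]
  rw [hself, hs]
  have := D.inv_law (D.dag h)
  rw [D.dag_dag] at this
  calc (h ≫ D.dag h) ≫ h ≫ D.dag h = h ≫ (D.dag h ≫ h ≫ D.dag h) := by
        simp [Category.assoc]
    _ = h ≫ D.dag h := by rw [this]
end

section
/- In a compact inverse category C, the set S = { s : I → I | s s† = s } of idempotent scalars forms a bounded meet-semilattice under composition, with top element id_I. -/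
open CategoryTheory MonoidalCategory

private lemma scalar_comm {C : Type*} [Category C] [MonoidalCategory C]
    (s t : 𝟙_ C ⟶ 𝟙_ C) : s ≫ t = t ≫ s := by
  have h1 : (λ_ (𝟙_ C)).inv ≫ (𝟙_ C ◁ s) ≫ (t ▷ 𝟙_ C) ≫ (ρ_ (𝟙_ C)).hom
      = s ≫ t := by
    rw [← MonoidalCategory.leftUnitor_inv_naturality_assoc,
      MonoidalCategory.unitors_inv_equal,
      ← MonoidalCategory.rightUnitor_inv_naturality_assoc]
    simp
  have h2 : (λ_ (𝟙_ C)).inv ≫ (𝟙_ C ◁ s) ≫ (t ▷ 𝟙_ C) ≫ (ρ_ (𝟙_ C)).hom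
      = t ≫ s := by
    rw [MonoidalCategory.whisker_exchange_assoc,
      MonoidalCategory.unitors_inv_equal,
      ← MonoidalCategory.rightUnitor_inv_naturality_assoc,
      ← MonoidalCategory.unitors_equal, MonoidalCategory.leftUnitor_naturality]
    rw [← MonoidalCategory.unitors_inv_equal]
    simp
  rw [← h1, h2]

/-- In a compact inverse category `C`, the set
`S = { s : I ⟶ I | s ≫ s† = s }` of idempotent scalars forms a bounded
meet-semilattice under composition with top element `𝟙 I`: it contains `𝟙 I`,
is closed under composition, and composition on it is commutative and
idempotent (so `s ∧ t = s ≫ t` and `⊤ = 𝟙 I`). -/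
theorem stmt14 {C : Type*} [Category C] [MonoidalCategory C]
    [SymmetricCategory C] [RightRigidCategory C]
    (D : CompactInverseStruct C) :
    (𝟙 (𝟙_ C) ≫ D.dag (𝟙 (𝟙_ C)) = 𝟙 (𝟙_ C)) ∧
    (∀ s t : 𝟙_ C ⟶ 𝟙_ C, s ≫ D.dag s = s → t ≫ D.dag t = t →
      ((s ≫ t) ≫ D.dag (s ≫ t) = s ≫ t ∧ s ≫ t = t ≫ s ∧ s ≫ s = s ∧
       s ≫ 𝟙 (𝟙_ C) = s)) := by
  have key : ∀ s : 𝟙_ C ⟶ 𝟙_ C, s ≫ D.dag s = s → D.dag s = s := by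
    intro s hs
    have := congrArg D.dag hs
    rw [D.dag_comp, D.dag_dag] at this
    exact this.symm.trans hs
  refine ⟨by rw [D.dag_id]; simp, fun s t hs ht => ?_⟩
  have hs' := key s hs
  have ht' := key t ht
  have hss : s ≫ s = s := by nth_rewrite 2 [← hs']; exact hs
  have htt : t ≫ t = t := by nth_rewrite 2 [← ht']; exact ht
  refine ⟨?_, scalar_comm s t, hss, by simp⟩
  rw [D.dag_comp, hs', ht']
  calc (s ≫ t) ≫ t ≫ s = s ≫ (t ≫ t) ≫ s := by simp
    _ = s ≫ t ≫ s := by rw [htt]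
    _ = s ≫ s ≫ t := by rw [scalar_comm t s]
    _ = (s ≫ s) ≫ t := by simp
    _ = s ≫ t := by rw [hss]
end

section
/- In a compact inverse category, if f : A → B and g : B → C satisfy tr(f f†) = s and tr(g g†) = s for an idempotent scalar s, then tr((g∘f)(g∘f)†) = s; moreover s • id_A is an identity for this class of morphisms, i.e. f ∘ (s • id_A) = f. -/
open CategoryTheory MonoidalCategory

namespace Stmt15Aux

variable {C : Type*} [Category C] [MonoidalCategory C]

theorem smul_comp (t : 𝟙_ C ⟶ 𝟙_ C) {X Y Z : C} (u : X ⟶ Y) (v : Y ⟶ Z) :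
    smul t u ≫ v = smul t (u ≫ v) := by
  simp [smul, MonoidalCategory.tensorHom_def]

theorem comp_smul (t : 𝟙_ C ⟶ 𝟙_ C) {X Y Z : C} (u : X ⟶ Y) (v : Y ⟶ Z) :
    u ≫ smul t v = smul t (u ≫ v) := by
  simp only [smul, MonoidalCategory.tensorHom_def, Category.assoc, MonoidalCategory.whiskerLeft_comp]
  rw [leftUnitor_inv_naturality_assoc, whisker_exchange_assoc]

theorem scalar_smul (t : 𝟙_ C ⟶ 𝟙_ C) {Z : C} (u : 𝟙_ C ⟶ Z) :
    smul t u = t ≫ u := by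
  simp [smul, MonoidalCategory.tensorHom_def, ← MonoidalCategory.unitors_equal,
    ← MonoidalCategory.unitors_inv_equal]

theorem smul_id_whiskerRight (t : 𝟙_ C ⟶ 𝟙_ C) (X Y : C) :
    (smul t (𝟙 X)) ▷ Y = smul t (𝟙 (X ⊗ Y)) := by
  simp [smul, MonoidalCategory.tensorHom_def]

variable [SymmetricCategory C] [RightRigidCategory C]

theorem dag_whiskerRight (D : CompactInverseStruct C) {X Y : C} (h : X ⟶ Y) (Z : C) :
    D.dag (h ▷ Z) = D.dag h ▷ Z := by
  rw [← tensorHom_id, D.dag_tensor, D.dag_id, tensorHom_id]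

theorem dag_eta (D : CompactInverseStruct C) (B : C) :
    D.dag (η_ B Bᘁ) = (β_ B Bᘁ).hom ≫ ε_ B Bᘁ := by
  rw [D.counit_eq, ← Category.assoc, SymmetricCategory.symmetry, Category.id_comp]

theorem name_eps (D : CompactInverseStruct C) {B : C} (h : B ⟶ B) :
    η_ B Bᘁ ≫ (h ▷ Bᘁ) ≫ D.dag (η_ B Bᘁ) = Tr h := by
  rw [dag_eta, Tr]

theorem Tr_eq_trDual {B : C} (h : B ⟶ B) : Tr h = trDual h := by
  rw [Tr, trDual, BraidedCategory.braiding_naturality_left_assoc]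

theorem dag_Tr (D : CompactInverseStruct C) {B : C} (h : B ⟶ B) :
    D.dag (Tr h) = Tr (D.dag h) := by
  conv_lhs => rw [Tr, D.counit_eq]
  rw [D.dag_comp, D.dag_comp, D.dag_comp, D.dag_comp, D.dag_dag, D.dag_braid, D.dag_braid,
    dag_whiskerRight, ← SymmetricCategory.braiding_swap_eq_inv_braiding,
    ← SymmetricCategory.braiding_swap_eq_inv_braiding]
  simp only [Category.assoc, SymmetricCategory.symmetry_assoc]
  rw [name_eps]

/-- unname -/
def un {B : C} (m : 𝟙_ C ⟶ B ⊗ Bᘁ) : B ⟶ B :=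
  (λ_ B).inv ≫ (m ▷ B) ≫ (α_ B Bᘁ B).hom ≫ (B ◁ ε_ B Bᘁ) ≫ (ρ_ B).hom

theorem un_name {B : C} (h : B ⟶ B) : un (η_ B Bᘁ ≫ (h ▷ Bᘁ)) = h := by
  rw [un, comp_whiskerRight]
  simp only [Category.assoc]
  rw [associator_naturality_left_assoc, ← whisker_exchange_assoc,
    ExactPairing.evaluation_coevaluation_assoc]
  simp [rightUnitor_naturality]

theorem un_scalar {B : C} (t : 𝟙_ C ⟶ 𝟙_ C) (m : 𝟙_ C ⟶ B ⊗ Bᘁ) :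
    un (t ≫ m) = smul t (𝟙 B) ≫ un m := by
  rw [un, un, comp_whiskerRight]
  have h1 : (λ_ B).inv ≫ t ▷ B = smul t (𝟙 B) ≫ (λ_ B).inv := by
    rw [smul, tensorHom_id]
    simp
  simp only [Category.assoc] at h1 ⊢
  rw [← Category.assoc, h1]
  simp only [Category.assoc]


theorem un_eta (B : C) : un (η_ B Bᘁ) = 𝟙 B := by
  have h := un_name (𝟙 B) (C := C)
  simpa using h

theorem smul_id_smul_id (t r : 𝟙_ C ⟶ 𝟙_ C) (X : C) :
    smul t (𝟙 X) ≫ smul r (𝟙 X) = smul (t ≫ r) (𝟙 X) := by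
  simp only [smul, tensorHom_id, Category.assoc, Iso.hom_inv_id_assoc]
  rw [← comp_whiskerRight_assoc]

theorem Tr_smul (t : 𝟙_ C ⟶ 𝟙_ C) {B : C} (h : B ⟶ B) :
    Tr (smul t h) = t ≫ Tr h := by
  rw [Tr, Tr, show smul t h = smul t (𝟙 B) ≫ h from by rw [smul_comp, Category.id_comp],
    comp_whiskerRight, smul_id_whiskerRight]
  have h1 : η_ B Bᘁ ≫ smul t (𝟙 (B ⊗ Bᘁ)) = t ≫ η_ B Bᘁ := by
    rw [comp_smul, Category.comp_id, scalar_smul]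
  slice_lhs 1 2 => rw [h1]
  simp only [Category.assoc]

theorem absorb (D : CompactInverseStruct C) {B : C} (p : B ⟶ B)
    (hp : D.dag p = p) (hpp : p ≫ p = p) :
    smul (Tr p) (𝟙 B) ≫ p = p := by
  have hn : (η_ B Bᘁ ≫ (p ▷ Bᘁ)) ≫ D.dag (η_ B Bᘁ ≫ (p ▷ Bᘁ)) = Tr p := by
    rw [D.dag_comp, dag_whiskerRight, hp]
    simp only [Category.assoc]
    rw [← comp_whiskerRight_assoc, hpp, name_eps]
  have hc : Tr p ≫ (η_ B Bᘁ ≫ (p ▷ Bᘁ)) = η_ B Bᘁ ≫ (p ▷ Bᘁ) := by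
    conv_rhs => rw [← D.inv_law (η_ B Bᘁ ≫ (p ▷ Bᘁ)), ← Category.assoc, hn]
  have h2 := congrArg un hc
  rwa [un_scalar, un_name] at h2

theorem proj_eq (D : CompactInverseStruct C) {B : C} (p : B ⟶ B)
    (hp : D.dag p = p) (hpp : p ≫ p = p) :
    p = smul (Tr p ≫ Tr p) (𝟙 B) := by
  have hdagn : D.dag (η_ B Bᘁ ≫ (p ▷ Bᘁ)) = (p ▷ Bᘁ) ≫ D.dag (η_ B Bᘁ) := by
    rw [D.dag_comp, dag_whiskerRight, hp]
  have h1 : η_ B Bᘁ ≫ D.dag (η_ B Bᘁ ≫ (p ▷ Bᘁ)) = Tr p := by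
    rw [hdagn]; exact name_eps D p
  have h2 : (η_ B Bᘁ ≫ (p ▷ Bᘁ)) ≫ D.dag (η_ B Bᘁ) = Tr p := by
    rw [Category.assoc]; exact name_eps D p
  have h3 : η_ B Bᘁ ≫ D.dag (η_ B Bᘁ) = Tr (𝟙 B) := by
    have h := name_eps D (𝟙 B)
    simpa using h
  have hd : Tr (𝟙 B) ≫ η_ B Bᘁ = η_ B Bᘁ := by
    conv_rhs => rw [← D.inv_law (η_ B Bᘁ)]
    rw [← Category.assoc, h3]
  have hcn : Tr p ≫ (η_ B Bᘁ ≫ (p ▷ Bᘁ)) = η_ B Bᘁ ≫ (p ▷ Bᘁ) := by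
    have h4 : (η_ B Bᘁ ≫ (p ▷ Bᘁ)) ≫ D.dag (η_ B Bᘁ ≫ (p ▷ Bᘁ)) = Tr p := by
      rw [D.dag_comp, dag_whiskerRight, hp]
      simp only [Category.assoc]
      rw [← comp_whiskerRight_assoc, hpp, name_eps]
    conv_rhs => rw [← D.inv_law (η_ B Bᘁ ≫ (p ▷ Bᘁ)), ← Category.assoc, h4]
  have hcomm := D.comm_law (D.dag (η_ B Bᘁ)) (D.dag (η_ B Bᘁ ≫ (p ▷ Bᘁ)))
  rw [D.dag_dag, D.dag_dag] at hcomm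
  simp only [Category.assoc] at hcomm
  have E := congrArg (fun x => η_ B Bᘁ ≫ x) hcomm
  -- E : η ≫ dagη ≫ η ≫ dagn ≫ n = η ≫ dagn ≫ n ≫ dagη ≫ η
  rw [← Category.assoc, h3] at E
  rw [← Category.assoc, hd] at E
  rw [← Category.assoc, h1] at E
  rw [hcn] at E
  -- now handle RHS of E
  have h5 := congrArg (· ≫ η_ B Bᘁ) (name_eps D p)
  simp only [Category.assoc] at h5
  rw [h5] at E
  rw [← Category.assoc, h1] at E
  -- E : η ≫ p▷Bᘁ = Tr p ≫ Tr p ≫ η  (with some grouping)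
  have hE := congrArg un E
  rw [un_name, un_scalar, un_scalar, un_eta, Category.comp_id, smul_id_smul_id] at hE
  exact hE


end Stmt15Aux

open Stmt15Aux

/-- In a compact inverse category, if `f : A ⟶ B` and
`g : B ⟶ C'` satisfy `tr(f f†) = s` and `tr(g g†) = s` for an idempotent
scalar `s`, then `tr((g∘f)(g∘f)†) = s`; moreover `s • 𝟙 A` is an identity for
this class of morphisms: `f ∘ (s • 𝟙 A) = f`. -/
theorem stmt15 {C : Type*} [Category C] [MonoidalCategory C]
    [SymmetricCategory C] [RightRigidCategory C]
    (D : CompactInverseStruct C) {A B C' : C} (f : A ⟶ B) (g : B ⟶ C')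
    (s : 𝟙_ C ⟶ 𝟙_ C) (hs : s ≫ D.dag s = s)
    (hf : trDual (f ≫ D.dag f) = s) (hg : trDual (g ≫ D.dag g) = s) :
    trDual ((f ≫ g) ≫ D.dag (f ≫ g)) = s ∧ smul s (𝟙 A) ≫ f = f := by
  have hgp : D.dag (g ≫ D.dag g) = g ≫ D.dag g := by rw [D.dag_comp, D.dag_dag]
  have invg : D.dag g ≫ g ≫ D.dag g = D.dag g := by
    have h := D.inv_law (D.dag g); rwa [D.dag_dag] at h
  have hgpp : (g ≫ D.dag g) ≫ (g ≫ D.dag g) = g ≫ D.dag g := by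
    simp only [Category.assoc]; rw [invg]
  have sTr : Tr (g ≫ D.dag g) = s := by rw [Tr_eq_trDual]; exact hg
  have sdag : D.dag s = s := by rw [← sTr, dag_Tr, hgp, sTr]
  have hss : s ≫ s = s := by rw [sdag] at hs; exact hs
  have hp2 : g ≫ D.dag g = smul s (𝟙 B) := by
    have h := proj_eq D (g ≫ D.dag g) hgp hgpp
    rwa [sTr, hss] at h
  have sTrf : Tr (f ≫ D.dag f) = s := by rw [Tr_eq_trDual]; exact hf
  constructor
  · rw [← Tr_eq_trDual, D.dag_comp]
    have hmid : (f ≫ g) ≫ D.dag g ≫ D.dag f = smul s (f ≫ D.dag f) := by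
      calc (f ≫ g) ≫ D.dag g ≫ D.dag f
          = f ≫ (g ≫ D.dag g) ≫ D.dag f := by simp only [Category.assoc]
        _ = f ≫ smul s (𝟙 B) ≫ D.dag f := by rw [hp2]
        _ = smul s (f ≫ D.dag f) := by rw [smul_comp, Category.id_comp, comp_smul]
    rw [hmid, Tr_smul, sTrf, hss]
  · have hep : D.dag (f ≫ D.dag f) = f ≫ D.dag f := by rw [D.dag_comp, D.dag_dag]
    have invf : D.dag f ≫ f ≫ D.dag f = D.dag f := by
      have h := D.inv_law (D.dag f); rwa [D.dag_dag] at h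
    have hepp : (f ≫ D.dag f) ≫ (f ≫ D.dag f) = f ≫ D.dag f := by
      simp only [Category.assoc]; rw [invf]
    have habs := absorb D (f ≫ D.dag f) hep hepp
    rw [sTrf] at habs
    have hf2 : (f ≫ D.dag f) ≫ f = f := by rw [Category.assoc, D.inv_law]
    calc smul s (𝟙 A) ≫ f = smul s (𝟙 A) ≫ (f ≫ D.dag f) ≫ f := by rw [hf2]
      _ = (smul s (𝟙 A) ≫ (f ≫ D.dag f)) ≫ f := by simp only [Category.assoc]
      _ = (f ≫ D.dag f) ≫ f := by rw [habs]
      _ = f := hf2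
end

section
/- In a compact inverse category, a morphism r : R → I is a split monomorphism if and only if r† ∘ r = id_R (r is an isometry); moreover for any isometry r, the morphism r ⊗ id_R : R ⊗ R → I ⊗ R is invertible with inverse r† ⊗ id_R. -/
open CategoryTheory MonoidalCategory

/-- In a compact inverse category, a morphism `r : R ⟶ I` is a
split monomorphism if and only if `r† ∘ r = 𝟙 R` (`r` is an isometry);
moreover, for any isometry `r`, the morphism `r ⊗ 𝟙 R : R ⊗ R ⟶ I ⊗ R` is
invertible with inverse `r† ⊗ 𝟙 R`. -/
theorem stmt16 {C : Type*} [Category C] [MonoidalCategory C]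
    [SymmetricCategory C] [RightRigidCategory C]
    (D : CompactInverseStruct C) {R : C} (r : R ⟶ 𝟙_ C) :
    (IsSplitMono r ↔ r ≫ D.dag r = 𝟙 R) ∧
    (r ≫ D.dag r = 𝟙 R →
      (r ▷ R) ≫ (D.dag r ▷ R) = 𝟙 (R ⊗ R) ∧
      (D.dag r ▷ R) ≫ (r ▷ R) = 𝟙 (𝟙_ C ⊗ R)) := by
  have split_of : r ≫ D.dag r = 𝟙 R → IsSplitMono r := fun h =>
    ⟨⟨⟨D.dag r, h⟩⟩⟩
  constructor
  · constructor
    · intro h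
      calc r ≫ D.dag r = (r ≫ D.dag r) ≫ (r ≫ retraction r) := by
            rw [IsSplitMono.id]; simp
        _ = (r ≫ D.dag r ≫ r) ≫ retraction r := by simp
        _ = r ≫ retraction r := by rw [D.inv_law]
        _ = 𝟙 R := IsSplitMono.id r
    · exact split_of
  · intro h
    refine ⟨by rw [← comp_whiskerRight, h, id_whiskerRight], ?_⟩
    have hmono : IsSplitMono r := split_of h
    -- the scalar s = r† ≫ r
    set s : 𝟙_ C ⟶ 𝟙_ C := D.dag r ≫ r with hs
    have key : ((λ_ R).inv ≫ (s ▷ R) ≫ (λ_ R).hom) ≫ r = 𝟙 R ≫ r := by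
      calc ((λ_ R).inv ≫ (s ▷ R) ≫ (λ_ R).hom) ≫ r
          = (λ_ R).inv ≫ (s ▷ R) ≫ (𝟙_ C ◁ r) ≫ (λ_ (𝟙_ C)).hom := by
            rw [MonoidalCategory.leftUnitor_naturality]; simp
        _ = (λ_ R).inv ≫ (𝟙_ C ◁ r) ≫ (s ▷ 𝟙_ C) ≫ (λ_ (𝟙_ C)).hom := by
            rw [whisker_exchange_assoc]
        _ = r ≫ (λ_ (𝟙_ C)).inv ≫ (s ▷ 𝟙_ C) ≫ (λ_ (𝟙_ C)).hom := by
            rw [← MonoidalCategory.leftUnitor_inv_naturality_assoc]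
        _ = r ≫ (ρ_ (𝟙_ C)).inv ≫ (s ▷ 𝟙_ C) ≫ (ρ_ (𝟙_ C)).hom := by
            rw [MonoidalCategory.unitors_inv_equal, MonoidalCategory.unitors_equal]
        _ = r ≫ s := by rw [MonoidalCategory.rightUnitor_naturality]; simp
        _ = r ≫ D.dag r ≫ r := by rw [hs]
        _ = 𝟙 R ≫ r := by rw [← Category.assoc, h]
    have key2 : (λ_ R).inv ≫ (s ▷ R) ≫ (λ_ R).hom = 𝟙 R := by
      exact (cancel_mono r).mp key
    have : s ▷ R = 𝟙 (𝟙_ C ⊗ R) := by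
      have := congrArg (fun t => (λ_ R).hom ≫ t ≫ (λ_ R).inv) key2
      simpa using this
    rw [← comp_whiskerRight, ← hs, this]
end

section
/- If C is a compact closed dagger category and p : A → A is a dagger idempotent (p = p∘p = p†), then in the dagger splitting completion the split object of p has a dual given by the split object of p* : A* → A*, with unit (p* ⊗ p) ∘ η_A and counit ε_A ∘ (p ⊗ p*); hence the dagger idempotent completion of a compact (dagger/inverse) category is again compact (dagger/inverse). -/
open CategoryTheory MonoidalCategory

/-- A compact dagger category: a symmetric monoidal category in which every
object has a (right) dual, equipped with an identity-on-objects contravariant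
involution `dag` that respects the tensor, inverts all coherence isomorphisms,
and recovers the counit of each duality from the unit via the symmetry. -/
structure CompactDaggerStruct (C : Type*) [Category C] [MonoidalCategory C]
    [SymmetricCategory C] [RightRigidCategory C] where
  dag : ∀ {A B : C}, (A ⟶ B) → (B ⟶ A)
  dag_dag : ∀ {A B : C} (f : A ⟶ B), dag (dag f) = f
  dag_comp : ∀ {A B D : C} (f : A ⟶ B) (g : B ⟶ D), dag (f ≫ g) = dag g ≫ dag f
  dag_id : ∀ (A : C), dag (𝟙 A) = 𝟙 A
  dag_tensor : ∀ {A B A' B' : C} (f : A ⟶ B) (g : A' ⟶ B'),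
    dag (f ⊗ₘ g) = dag f ⊗ₘ dag g
  dag_assoc : ∀ (A B D : C), dag (α_ A B D).hom = (α_ A B D).inv
  dag_lunit : ∀ (A : C), dag (λ_ A).hom = (λ_ A).inv
  dag_runit : ∀ (A : C), dag (ρ_ A).hom = (ρ_ A).inv
  dag_braid : ∀ (A B : C), dag (β_ A B).hom = (β_ A B).inv
  counit_eq : ∀ (A : C), ε_ A Aᘁ = (β_ Aᘁ A).hom ≫ dag (η_ A Aᘁ)

/-- If `C` is a compact closed dagger category and `p : A ⟶ A`
is a dagger idempotent (`p ≫ p = p` and `p† = p`), then in the dagger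
splitting completion the split object of `p` has a dual given by the split
object of `pᘁ : Aᘁ ⟶ Aᘁ`, with unit `η_p = η_A ≫ (p ⊗ pᘁ)` and counit
`ε_p = (pᘁ ⊗ p) ≫ ε_A`: these are well-defined morphisms of the splitting
(absorbed by the idempotents on either side) and satisfy the snake equations
relative to the idempotents `p` and `pᘁ`. Hence the dagger idempotent
completion of a compact (dagger/inverse) category is again compact. -/
theorem stmt17 {C : Type*} [Category C] [MonoidalCategory C]
    [SymmetricCategory C] [RightRigidCategory C]
    (D : CompactDaggerStruct C) {A : C} (p : A ⟶ A)
    (hidem : p ≫ p = p) (hdag : D.dag p = p) :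
    -- well-definedness in the splitting completion
    ((η_ A Aᘁ ≫ (p ⊗ₘ pᘁ)) ≫ (p ⊗ₘ pᘁ) = η_ A Aᘁ ≫ (p ⊗ₘ pᘁ)) ∧
    ((pᘁ ⊗ₘ p) ≫ ((pᘁ ⊗ₘ p) ≫ ε_ A Aᘁ) = (pᘁ ⊗ₘ p) ≫ ε_ A Aᘁ) ∧
    -- snake equations relative to the idempotents p and pᘁ
    (((η_ A Aᘁ ≫ (p ⊗ₘ pᘁ)) ▷ A) ≫ (α_ A Aᘁ A).hom ≫
        (A ◁ ((pᘁ ⊗ₘ p) ≫ ε_ A Aᘁ)) = (λ_ A).hom ≫ p ≫ (ρ_ A).inv) ∧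
    ((Aᘁ ◁ (η_ A Aᘁ ≫ (p ⊗ₘ pᘁ))) ≫ (α_ Aᘁ A Aᘁ).inv ≫
        (((pᘁ ⊗ₘ p) ≫ ε_ A Aᘁ) ▷ Aᘁ) = (ρ_ Aᘁ).hom ≫ pᘁ ≫ (λ_ Aᘁ).inv) := by

  have hpd : (pᘁ) ≫ (pᘁ) = (pᘁ) := by
    rw [← comp_rightAdjointMate, hidem]
  have hη : η_ A Aᘁ ≫ (p ⊗ₘ pᘁ) = η_ A Aᘁ ≫ p ▷ Aᘁ := by
    rw [tensorHom_def', ← Category.assoc, coevaluation_comp_rightAdjointMate,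
      Category.assoc, ← comp_whiskerRight, hidem]
  have hε : (pᘁ ⊗ₘ p) ≫ ε_ A Aᘁ = (pᘁ) ▷ A ≫ ε_ A Aᘁ := by
    rw [MonoidalCategory.tensorHom_def, Category.assoc, ← rightAdjointMate_comp_evaluation,
      ← Category.assoc, ← comp_whiskerRight, hpd]
  refine ⟨?_, ?_, ?_, ?_⟩
  · rw [Category.assoc, tensorHom_comp_tensorHom, hidem, hpd]
  · rw [← Category.assoc, tensorHom_comp_tensorHom, hidem, hpd]
  · rw [hη, hε]
    simp only [comp_whiskerRight, MonoidalCategory.whiskerLeft_comp, Category.assoc]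
    have key : (η_ A Aᘁ ≫ p ▷ Aᘁ) ≫ A ◁ (pᘁ) = η_ A Aᘁ ≫ p ▷ Aᘁ := by
      rw [Category.assoc, ← MonoidalCategory.tensorHom_def, hη]
    rw [← associator_naturality_middle_assoc, ← comp_whiskerRight_assoc,
      ← comp_whiskerRight_assoc, key, comp_whiskerRight_assoc,
      associator_naturality_left_assoc, ← whisker_exchange,
      ExactPairing.evaluation_coevaluation_assoc, ← rightUnitor_inv_naturality]
  · rw [hε]
    have hη' : η_ A Aᘁ ≫ (p ⊗ₘ pᘁ) = η_ A Aᘁ ≫ A ◁ (pᘁ) := by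
      rw [hη, ← coevaluation_comp_rightAdjointMate]
    rw [hη']
    simp only [comp_whiskerRight, MonoidalCategory.whiskerLeft_comp, Category.assoc]
    rw [associator_inv_naturality_right_assoc, whisker_exchange_assoc,
      ← associator_inv_naturality_left_assoc, whisker_exchange_assoc,
      whisker_exchange, ExactPairing.coevaluation_evaluation_assoc,
      rightUnitor_naturality_assoc, ← leftUnitor_inv_naturality]
    slice_lhs 2 3 => rw [hpd]
end
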